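/- Under the stated setup, the conditional mutual information of X_{k₁} and Y given X_{k₀} equals the conditional mutual information of X_{k₀} and Y given X_{k₁}, and both equal ((m-1)/m)·log( m/(m-1) ) + (1/m)·log m: I(X_{k₁}; Y ∣ X_{k₀}) = I(X_{k₀}; Y ∣ X_{k₁}) = I(X_{k₀}, X_{k₁}; Y). -/

import Mathlib

/-!
Write `Y = 𝟙{U = V}` for independent `U, V` uniform on a set of size `n`. Given `U = a`, the
event `Y = 1` is the event `V = a`, so `Y` is independent of `U` (and symmetrically of `V`), with
`P(Y = 1) = 1/n`. In each of the three sums `Y` is determined by the other two variables, whose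
(conditional) joint law is uniform, so at every point of positive mass the log-ratio is
`-log P(Y = y)`. Every sum is therefore the entropy `H(Y) = binEntropy (1/n)`.
-/

open MeasureTheory ProbabilityTheory Real

theorem toReal_cond_apply {Ω : Type*} [MeasurableSpace Ω] (μ : Measure Ω) {s : Set Ω}
    (hs : MeasurableSet s) (t : Set Ω) :
    (μ[t | s]).toReal = (μ.real s)⁻¹ * μ.real (s ∩ t) := by
  rw [cond_apply hs, ENNReal.toReal_mul, ENNReal.toReal_inv]
  rfl

theorem Measurable.measurableSet_setOf_eq {Ω β : Type*} [MeasurableSpace Ω] [MeasurableSpace β]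
    [MeasurableSingletonClass β] {f : Ω → β} (hf : Measurable f) (b : β) :
    MeasurableSet {ω | f ω = b} :=
  hf (measurableSet_singleton b)

theorem sum_measureReal_setOf_eq_inter {Ω β : Type*} [MeasurableSpace Ω] [MeasurableSpace β]
    [MeasurableSingletonClass β] [Fintype β] (μ : Measure Ω) [IsFiniteMeasure μ] {f : Ω → β}
    (hf : Measurable f) (t : Set Ω) :
    ∑ b, μ.real ({ω | f ω = b} ∩ t) = μ.real t := by
  have := sum_measureReal_preimage_singleton (μ := μ.restrict t) Finset.univ
    (fun b _ => hf (measurableSet_singleton b))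
  simp only [measureReal_restrict_apply (hf (measurableSet_singleton _)), Finset.coe_univ,
    Set.preimage_univ, measureReal_restrict_apply MeasurableSet.univ, Set.univ_inter] at this
  exact this

theorem natCast_card_ne_zero_of_isProbabilityMeasure {Ω α : Type*} [MeasurableSpace Ω]
    [Fintype α] (μ : Measure Ω) [IsProbabilityMeasure μ] (U : Ω → α) :
    (Fintype.card α : ℝ) ≠ 0 :=
  have : Nonempty α := (nonempty_of_isProbabilityMeasure μ).map U
  Nat.cast_ne_zero.mpr Fintype.card_ne_zero

theorem Fintype.sum_ite_eq_add_card_sub_one_mul {α R : Type*} [Fintype α] [DecidableEq α]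
    [Ring R] (a : α) (x z : R) :
    ∑ b, (if a = b then x else z) = x + ((Fintype.card α : R) - 1) * z := by
  have h : ∀ b, (if a = b then x else z) = (if a = b then x - z else 0) + z := by
    intro b; split_ifs <;> simp
  simp only [h, Finset.sum_add_distrib, Finset.sum_ite_eq, Finset.mem_univ, if_true,
    Finset.sum_const, Finset.card_univ, nsmul_eq_mul]
  noncomm_ring

theorem sum_ite_mul_log_div_mul {ι : Type*} [DecidableEq ι] {s : Finset ι} {e : ι} (he : e ∈ s)
    {p : ℝ} (hp : p ≠ 0) (q : ι → ℝ) :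
    ∑ y ∈ s, (if y = e then p else 0) * log ((if y = e then p else 0) / (p * q y)) =
      p * log (q e)⁻¹ := by
  simp [ite_mul, Finset.sum_ite_eq', he, div_mul_cancel_left₀ hp]

def eqIndicator {Ω α : Type*} [DecidableEq α] (U V : Ω → α) (ω : Ω) : ℕ :=
  if U ω = V ω then 1 else 0

section EqIndicator

variable {Ω α : Type*} [DecidableEq α] {U V : Ω → α}

theorem eqIndicator_comm (U V : Ω → α) : eqIndicator U V = eqIndicator V U := by
  ext ω
  simp only [eqIndicator, eq_comm]

theorem setOf_eq_inter_setOf_eqIndicator_one (a : α) :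
    {ω | U ω = a} ∩ {ω | eqIndicator U V ω = 1} = {ω | U ω = a} ∩ {ω | V ω = a} := by
  ext ω
  simp only [eqIndicator, Set.mem_inter_iff, Set.mem_ofPred_eq]
  split_ifs <;> grind

theorem setOf_eqIndicator_zero :
    {ω | eqIndicator U V ω = 0} = {ω | eqIndicator U V ω = 1}ᶜ := by
  ext ω
  simp only [eqIndicator, Set.mem_compl_iff, Set.mem_ofPred_eq]
  split_ifs <;> simp

theorem setOf_eqIndicator_eq_empty {y : ℕ} (hy₀ : y ≠ 0) (hy₁ : y ≠ 1) :
    {ω | eqIndicator U V ω = y} = ∅ := by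
  ext ω
  simp only [eqIndicator, Set.mem_ofPred_eq, Set.mem_empty_iff_false, iff_false]
  split_ifs <;> omega

theorem setOf_eq_inter_setOf_eq_inter_setOf_eqIndicator (a b : α) (y : ℕ) :
    {ω | U ω = a} ∩ {ω | V ω = b} ∩ {ω | eqIndicator U V ω = y} =
      if y = (if a = b then 1 else 0) then {ω | U ω = a} ∩ {ω | V ω = b} else ∅ := by
  ext ω
  simp only [eqIndicator, Set.mem_inter_iff, Set.mem_ofPred_eq]
  split_ifs <;> grind

theorem ite_mem_zero_one (a b : α) : (if a = b then 1 else 0) ∈ ({0, 1} : Finset ℕ) := by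
  split_ifs <;> simp

end EqIndicator

section IndepUniformPair

variable {Ω α : Type*} [MeasurableSpace Ω] [Fintype α] [MeasurableSpace α] {μ : Measure Ω}
  {U V : Ω → α}

structure IsIndepUniformPair (μ : Measure Ω) (U V : Ω → α) : Prop where
  measurable_left : Measurable U
  measurable_right : Measurable V
  indepFun : IndepFun U V μ
  measureReal_left : ∀ a, μ.real {ω | U ω = a} = (Fintype.card α : ℝ)⁻¹
  measureReal_right : ∀ b, μ.real {ω | V ω = b} = (Fintype.card α : ℝ)⁻¹

theorem IsIndepUniformPair.symm (h : IsIndepUniformPair μ U V) : IsIndepUniformPair μ V U :=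
  ⟨h.measurable_right, h.measurable_left, h.indepFun.symm, h.measureReal_right,
    h.measureReal_left⟩

variable [MeasurableSingletonClass α]

theorem IsIndepUniformPair.measureReal_inter (h : IsIndepUniformPair μ U V) (a b : α) :
    μ.real ({ω | U ω = a} ∩ {ω | V ω = b}) =
      (Fintype.card α : ℝ)⁻¹ * (Fintype.card α : ℝ)⁻¹ := by
  have hmul : μ ({ω | U ω = a} ∩ {ω | V ω = b}) = μ {ω | U ω = a} * μ {ω | V ω = b} :=
    h.indepFun.measure_inter_preimage_eq_mul _ _ (measurableSet_singleton a)
      (measurableSet_singleton b)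
  rw [measureReal_def, hmul, ENNReal.toReal_mul]
  exact congr_arg₂ (· * ·) (h.measureReal_left a) (h.measureReal_right b)

theorem IsIndepUniformPair.toReal_cond_setOf_eq [IsProbabilityMeasure μ]
    (h : IsIndepUniformPair μ U V) (a b : α) :
    (μ[{ω | V ω = b} | {ω | U ω = a}]).toReal = (Fintype.card α : ℝ)⁻¹ := by
  have hcard := natCast_card_ne_zero_of_isProbabilityMeasure μ U
  rw [toReal_cond_apply μ (h.measurable_left.measurableSet_setOf_eq a), h.measureReal_left,
    h.measureReal_inter, inv_inv, mul_inv_cancel_left₀ hcard]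

variable [DecidableEq α]

theorem IsIndepUniformPair.measurable_eqIndicator (h : IsIndepUniformPair μ U V) :
    Measurable (eqIndicator U V) :=
  Measurable.ite (measurableSet_eq_fun h.measurable_left h.measurable_right) measurable_const
    measurable_const

theorem IsIndepUniformPair.measureReal_inter_inter_setOf_eqIndicator (h : IsIndepUniformPair μ U V)
    (a b : α) (y : ℕ) :
    μ.real ({ω | U ω = a} ∩ {ω | V ω = b} ∩ {ω | eqIndicator U V ω = y}) =
      if y = (if a = b then 1 else 0) then (Fintype.card α : ℝ)⁻¹ * (Fintype.card α : ℝ)⁻¹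
      else 0 := by
  rw [setOf_eq_inter_setOf_eq_inter_setOf_eqIndicator, apply_ite μ.real, h.measureReal_inter,
    measureReal_empty]

variable [IsProbabilityMeasure μ]

theorem IsIndepUniformPair.measureReal_setOf_eqIndicator_one (h : IsIndepUniformPair μ U V) :
    μ.real {ω | eqIndicator U V ω = 1} = (Fintype.card α : ℝ)⁻¹ := by
  have hcard := natCast_card_ne_zero_of_isProbabilityMeasure μ U
  rw [← sum_measureReal_setOf_eq_inter μ h.measurable_left]
  simp only [setOf_eq_inter_setOf_eqIndicator_one, h.measureReal_inter, Finset.sum_const,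
    Finset.card_univ, nsmul_eq_mul]
  field_simp

theorem IsIndepUniformPair.measureReal_setOf_eqIndicator_zero (h : IsIndepUniformPair μ U V) :
    μ.real {ω | eqIndicator U V ω = 0} = 1 - (Fintype.card α : ℝ)⁻¹ := by
  rw [setOf_eqIndicator_zero,
    probReal_compl_eq_one_sub (h.measurable_eqIndicator.measurableSet_setOf_eq 1),
    h.measureReal_setOf_eqIndicator_one]

theorem IsIndepUniformPair.measureReal_inter_setOf_eqIndicator_eq_mul
    (h : IsIndepUniformPair μ U V) (a : α) (y : ℕ) :
    μ.real ({ω | U ω = a} ∩ {ω | eqIndicator U V ω = y}) =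
      μ.real {ω | U ω = a} * μ.real {ω | eqIndicator U V ω = y} := by
  rcases eq_or_ne y 1 with rfl | hy₁
  · rw [setOf_eq_inter_setOf_eqIndicator_one, h.measureReal_inter,
      h.measureReal_setOf_eqIndicator_one, h.measureReal_left]
  rcases eq_or_ne y 0 with rfl | hy₀
  · have hsplit := measureReal_inter_add_sdiff (μ := μ) (s := {ω | U ω = a})
      (h.measurable_eqIndicator.measurableSet_setOf_eq 1)
    rw [setOf_eq_inter_setOf_eqIndicator_one, h.measureReal_inter, h.measureReal_left] at hsplit
    rw [h.measureReal_setOf_eqIndicator_zero, setOf_eqIndicator_zero, ← Set.sdiff_eq,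
      h.measureReal_left]
    linear_combination hsplit
  · simp [setOf_eqIndicator_eq_empty hy₀ hy₁]

theorem IsIndepUniformPair.toReal_cond_inter_setOf_eqIndicator (h : IsIndepUniformPair μ U V)
    (a b : α) (y : ℕ) :
    (μ[{ω | V ω = b} ∩ {ω | eqIndicator U V ω = y} | {ω | U ω = a}]).toReal =
      if y = (if a = b then 1 else 0) then (Fintype.card α : ℝ)⁻¹ else 0 := by
  have hcard := natCast_card_ne_zero_of_isProbabilityMeasure μ U
  rw [toReal_cond_apply μ (h.measurable_left.measurableSet_setOf_eq a), h.measureReal_left,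
    ← Set.inter_assoc, h.measureReal_inter_inter_setOf_eqIndicator, inv_inv, mul_ite, mul_zero,
    mul_inv_cancel_left₀ hcard]

theorem IsIndepUniformPair.toReal_cond_setOf_eqIndicator (h : IsIndepUniformPair μ U V)
    (a : α) (y : ℕ) :
    (μ[{ω | eqIndicator U V ω = y} | {ω | U ω = a}]).toReal =
      μ.real {ω | eqIndicator U V ω = y} := by
  have hcard := natCast_card_ne_zero_of_isProbabilityMeasure μ U
  rw [toReal_cond_apply μ (h.measurable_left.measurableSet_setOf_eq a),
    h.measureReal_inter_setOf_eqIndicator_eq_mul, h.measureReal_left, inv_inv,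
    mul_inv_cancel_left₀ hcard]

theorem IsIndepUniformPair.sum_sum_mul_log_inv_measureReal_eqIndicator
    (h : IsIndepUniformPair μ U V) :
    ∑ a : α, (Fintype.card α : ℝ)⁻¹ * ∑ b : α, (Fintype.card α : ℝ)⁻¹ *
        log (μ.real {ω | eqIndicator U V ω = if a = b then 1 else 0})⁻¹ =
      binEntropy (Fintype.card α : ℝ)⁻¹ := by
  have hcard := natCast_card_ne_zero_of_isProbabilityMeasure μ U
  simp only [apply_ite (fun y => log (μ.real {ω | eqIndicator U V ω = y})⁻¹),
    h.measureReal_setOf_eqIndicator_one, h.measureReal_setOf_eqIndicator_zero, ← Finset.mul_sum,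
    Fintype.sum_ite_eq_add_card_sub_one_mul, Finset.sum_const, Finset.card_univ, nsmul_eq_mul,
    binEntropy]
  field_simp

theorem IsIndepUniformPair.condMutualInfo_eqIndicator_eq_binEntropy
    (h : IsIndepUniformPair μ U V) :
    ∑ a : α, (μ {ω | U ω = a}).toReal *
        ∑ b : α, ∑ y ∈ ({0, 1} : Finset ℕ),
          (μ[{ω | V ω = b} ∩ {ω | eqIndicator U V ω = y} | {ω | U ω = a}]).toReal *
            log
              ((μ[{ω | V ω = b} ∩ {ω | eqIndicator U V ω = y} | {ω | U ω = a}]).toReal /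
                ((μ[{ω | V ω = b} | {ω | U ω = a}]).toReal *
                  (μ[{ω | eqIndicator U V ω = y} | {ω | U ω = a}]).toReal)) =
      binEntropy (Fintype.card α : ℝ)⁻¹ := by
  have hcard := natCast_card_ne_zero_of_isProbabilityMeasure μ U
  simp only [← measureReal_def, h.measureReal_left, h.toReal_cond_inter_setOf_eqIndicator,
    h.toReal_cond_setOf_eq, h.toReal_cond_setOf_eqIndicator,
    sum_ite_mul_log_div_mul (ite_mem_zero_one _ _) (inv_ne_zero hcard)]
  exact h.sum_sum_mul_log_inv_measureReal_eqIndicator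

theorem IsIndepUniformPair.mutualInfo_eqIndicator_eq_binEntropy
    (h : IsIndepUniformPair μ U V) :
    ∑ a : α, ∑ b : α, ∑ y ∈ ({0, 1} : Finset ℕ),
        (μ ({ω | U ω = a} ∩ {ω | V ω = b} ∩ {ω | eqIndicator U V ω = y})).toReal *
          log
            ((μ ({ω | U ω = a} ∩ {ω | V ω = b} ∩ {ω | eqIndicator U V ω = y})).toReal /
              ((μ ({ω | U ω = a} ∩ {ω | V ω = b})).toReal *
                (μ {ω | eqIndicator U V ω = y}).toReal)) =
      binEntropy (Fintype.card α : ℝ)⁻¹ := by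
  have hcard := natCast_card_ne_zero_of_isProbabilityMeasure μ U
  simp only [← measureReal_def, h.measureReal_inter_inter_setOf_eqIndicator, h.measureReal_inter,
    sum_ite_mul_log_div_mul (ite_mem_zero_one _ _)
      (mul_ne_zero (inv_ne_zero hcard) (inv_ne_zero hcard))]
  rw [← h.sum_sum_mul_log_inv_measureReal_eqIndicator]
  simp only [Finset.mul_sum, mul_assoc]

end IndepUniformPair

theorem binEntropy_inv_natCast {n : ℕ} (hn : n ≠ 0) :
    binEntropy (n : ℝ)⁻¹ = ((n : ℝ) - 1) / n * log ((n : ℝ) / ((n : ℝ) - 1)) + 1 / n * log n := by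
  have : (1 : ℝ) - (n : ℝ)⁻¹ = ((n : ℝ) - 1) / n := by field_simp
  rw [binEntropy, this, inv_div, inv_inv]
  ring

theorem stmt_9_general
    {Ω : Type*} [MeasurableSpace Ω] (μ : Measure Ω) [IsProbabilityMeasure μ]
    (m d : ℕ) (hm : 2 ≤ m)
    (X : Fin d → Ω → Fin m)
    (hXmeas : ∀ i, Measurable (X i))
    (hXindep : iIndepFun X μ)
    (hXunif : ∀ (i : Fin d) (n : Fin m), μ {ω | X i ω = n} = 1 / m)
    (k₀ k₁ : Fin d) (hk : k₀ < k₁)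
    (Y : Ω → ℕ)
    (hY : ∀ ω, Y ω = if X k₀ ω = X k₁ ω then 1 else 0) :
    (∑ x₀ : Fin m, (μ {ω | X k₀ ω = x₀}).toReal *
        ∑ x₁ : Fin m, ∑ y ∈ ({0, 1} : Finset ℕ),
          (μ[{ω | X k₁ ω = x₁} ∩ {ω | Y ω = y} | {ω | X k₀ ω = x₀}]).toReal *
            Real.log
              ((μ[{ω | X k₁ ω = x₁} ∩ {ω | Y ω = y} | {ω | X k₀ ω = x₀}]).toReal /
                ((μ[{ω | X k₁ ω = x₁} | {ω | X k₀ ω = x₀}]).toReal *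
                  (μ[{ω | Y ω = y} | {ω | X k₀ ω = x₀}]).toReal))
      = ∑ x₂ : Fin m, (μ {ω | X k₁ ω = x₂}).toReal *
          ∑ x₁ : Fin m, ∑ y ∈ ({0, 1} : Finset ℕ),
            (μ[{ω | X k₀ ω = x₁} ∩ {ω | Y ω = y} | {ω | X k₁ ω = x₂}]).toReal *
              Real.log
                ((μ[{ω | X k₀ ω = x₁} ∩ {ω | Y ω = y} | {ω | X k₁ ω = x₂}]).toReal /
                  ((μ[{ω | X k₀ ω = x₁} | {ω | X k₁ ω = x₂}]).toReal *
                    (μ[{ω | Y ω = y} | {ω | X k₁ ω = x₂}]).toReal))) ∧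
    (∑ x₂ : Fin m, (μ {ω | X k₁ ω = x₂}).toReal *
        ∑ x₁ : Fin m, ∑ y ∈ ({0, 1} : Finset ℕ),
          (μ[{ω | X k₀ ω = x₁} ∩ {ω | Y ω = y} | {ω | X k₁ ω = x₂}]).toReal *
            Real.log
              ((μ[{ω | X k₀ ω = x₁} ∩ {ω | Y ω = y} | {ω | X k₁ ω = x₂}]).toReal /
                ((μ[{ω | X k₀ ω = x₁} | {ω | X k₁ ω = x₂}]).toReal *
                  (μ[{ω | Y ω = y} | {ω | X k₁ ω = x₂}]).toReal))
      = ∑ x₁ : Fin m, ∑ x₂ : Fin m, ∑ y ∈ ({0, 1} : Finset ℕ),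
          (μ ({ω | X k₀ ω = x₁} ∩ {ω | X k₁ ω = x₂} ∩ {ω | Y ω = y})).toReal *
            Real.log
              ((μ ({ω | X k₀ ω = x₁} ∩ {ω | X k₁ ω = x₂} ∩ {ω | Y ω = y})).toReal /
                ((μ ({ω | X k₀ ω = x₁} ∩ {ω | X k₁ ω = x₂})).toReal *
                  (μ {ω | Y ω = y}).toReal))) ∧
    (∑ x₁ : Fin m, ∑ x₂ : Fin m, ∑ y ∈ ({0, 1} : Finset ℕ),
        (μ ({ω | X k₀ ω = x₁} ∩ {ω | X k₁ ω = x₂} ∩ {ω | Y ω = y})).toReal *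
          Real.log
            ((μ ({ω | X k₀ ω = x₁} ∩ {ω | X k₁ ω = x₂} ∩ {ω | Y ω = y})).toReal /
              ((μ ({ω | X k₀ ω = x₁} ∩ {ω | X k₁ ω = x₂})).toReal *
                (μ {ω | Y ω = y}).toReal))
      = ((m : ℝ) - 1) / m * Real.log ((m : ℝ) / ((m : ℝ) - 1)) + 1 / m * Real.log m) := by
  obtain rfl : Y = eqIndicator (X k₀) (X k₁) := funext hY
  have hunif : ∀ i a, μ.real {ω | X i ω = a} = (Fintype.card (Fin m) : ℝ)⁻¹ := by
    simp [measureReal_def, hXunif]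
  have h : IsIndepUniformPair μ (X k₀) (X k₁) :=
    ⟨hXmeas k₀, hXmeas k₁, hXindep.indepFun hk.ne, hunif k₀, hunif k₁⟩
  have h₀₁ := h.condMutualInfo_eqIndicator_eq_binEntropy
  have h₁₀ := h.symm.condMutualInfo_eqIndicator_eq_binEntropy
  have hjoint := h.mutualInfo_eqIndicator_eq_binEntropy
  rw [← eqIndicator_comm] at h₁₀
  rw [Fintype.card_fin, binEntropy_inv_natCast (by omega)] at h₀₁ h₁₀ hjoint
  exact ⟨h₀₁.trans h₁₀.symm, h₁₀.trans hjoint.symm, hjoint⟩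

/-- The conditional mutual information of `X_{k₁}` and `Y` given
`X_{k₀}` equals the conditional mutual information of `X_{k₀}` and `Y` given `X_{k₁}`,
and both equal the joint mutual information `I(X_{k₀}, X_{k₁}; Y)`, which equals
`((m-1)/m)·log(m/(m-1)) + (1/m)·log m`. -/
theorem stmt_9
    {Ω : Type*} [MeasurableSpace Ω] (μ : Measure Ω) [IsProbabilityMeasure μ]
    (m d : ℕ) (hm : 2 ≤ m) (hd : 2 ≤ d)
    (X : Fin d → Ω → Fin m)
    (hXmeas : ∀ i, Measurable (X i))
    (hXindep : iIndepFun X μ)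
    (hXunif : ∀ (i : Fin d) (n : Fin m), μ {ω | X i ω = n} = 1 / m)
    (k₀ k₁ : Fin d) (hk : k₀ < k₁)
    (Y : Ω → ℕ)
    (hY : ∀ ω, Y ω = if X k₀ ω = X k₁ ω then 1 else 0) :
    (∑ x₀ : Fin m, (μ {ω | X k₀ ω = x₀}).toReal *
        ∑ x₁ : Fin m, ∑ y ∈ ({0, 1} : Finset ℕ),
          (μ[{ω | X k₁ ω = x₁} ∩ {ω | Y ω = y} | {ω | X k₀ ω = x₀}]).toReal *
            Real.log
              ((μ[{ω | X k₁ ω = x₁} ∩ {ω | Y ω = y} | {ω | X k₀ ω = x₀}]).toReal /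
                ((μ[{ω | X k₁ ω = x₁} | {ω | X k₀ ω = x₀}]).toReal *
                  (μ[{ω | Y ω = y} | {ω | X k₀ ω = x₀}]).toReal))
      = ∑ x₂ : Fin m, (μ {ω | X k₁ ω = x₂}).toReal *
          ∑ x₁ : Fin m, ∑ y ∈ ({0, 1} : Finset ℕ),
            (μ[{ω | X k₀ ω = x₁} ∩ {ω | Y ω = y} | {ω | X k₁ ω = x₂}]).toReal *
              Real.log
                ((μ[{ω | X k₀ ω = x₁} ∩ {ω | Y ω = y} | {ω | X k₁ ω = x₂}]).toReal /
                  ((μ[{ω | X k₀ ω = x₁} | {ω | X k₁ ω = x₂}]).toReal *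
                    (μ[{ω | Y ω = y} | {ω | X k₁ ω = x₂}]).toReal))) ∧
    (∑ x₂ : Fin m, (μ {ω | X k₁ ω = x₂}).toReal *
        ∑ x₁ : Fin m, ∑ y ∈ ({0, 1} : Finset ℕ),
          (μ[{ω | X k₀ ω = x₁} ∩ {ω | Y ω = y} | {ω | X k₁ ω = x₂}]).toReal *
            Real.log
              ((μ[{ω | X k₀ ω = x₁} ∩ {ω | Y ω = y} | {ω | X k₁ ω = x₂}]).toReal /
                ((μ[{ω | X k₀ ω = x₁} | {ω | X k₁ ω = x₂}]).toReal *
                  (μ[{ω | Y ω = y} | {ω | X k₁ ω = x₂}]).toReal))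
      = ∑ x₁ : Fin m, ∑ x₂ : Fin m, ∑ y ∈ ({0, 1} : Finset ℕ),
          (μ ({ω | X k₀ ω = x₁} ∩ {ω | X k₁ ω = x₂} ∩ {ω | Y ω = y})).toReal *
            Real.log
              ((μ ({ω | X k₀ ω = x₁} ∩ {ω | X k₁ ω = x₂} ∩ {ω | Y ω = y})).toReal /
                ((μ ({ω | X k₀ ω = x₁} ∩ {ω | X k₁ ω = x₂})).toReal *
                  (μ {ω | Y ω = y}).toReal))) ∧
    (∑ x₁ : Fin m, ∑ x₂ : Fin m, ∑ y ∈ ({0, 1} : Finset ℕ),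
        (μ ({ω | X k₀ ω = x₁} ∩ {ω | X k₁ ω = x₂} ∩ {ω | Y ω = y})).toReal *
          Real.log
            ((μ ({ω | X k₀ ω = x₁} ∩ {ω | X k₁ ω = x₂} ∩ {ω | Y ω = y})).toReal /
              ((μ ({ω | X k₀ ω = x₁} ∩ {ω | X k₁ ω = x₂})).toReal *
                (μ {ω | Y ω = y}).toReal))
      = ((m : ℝ) - 1) / m * Real.log ((m : ℝ) / ((m : ℝ) - 1)) + 1 / m * Real.log m) :=
  stmt_9_general μ m d hm X hXmeas hXindep hXunif k₀ k₁ hk Y hY
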